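/- arXiv:2005.09585 — 6 statements merged into one kernel-verified Lean document; each statement's English description precedes it below -/
import Mathlib

section
/- The Thue-Morse word is overlap-free: there do not exist integers i ≥ 0 and n ≥ 1 such that t(i+j) = t(i+n+j) for all 0 ≤ j ≤ n, where t(n) is the parity of the number of 1 bits in the binary representation of n. -/
/-- Thue-Morse sequence: parity of number of 1 bits of n. -/
def t (n : ℕ) : Fin 2 := ⟨(Nat.digits 2 n).sum % 2, Nat.mod_lt _ (by norm_num)⟩

private def f (n : ℕ) : ℕ := (Nat.digits 2 n).sum % 2

private lemma f_lt (n : ℕ) : f n < 2 := Nat.mod_lt _ (by norm_num)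

private lemma f_even (k : ℕ) : f (2 * k) = f k := by
  rcases Nat.eq_zero_or_pos k with rfl | hk
  · rfl
  · unfold f
    rw [Nat.digits_def' (by norm_num : (1:ℕ) < 2) (by omega)]
    simp [Nat.mul_mod_right, Nat.mul_div_cancel_left _ (by norm_num : (0:ℕ) < 2)]

private lemma f_odd (k : ℕ) : f (2 * k + 1) = (f k + 1) % 2 := by
  unfold f
  rw [Nat.digits_def' (by norm_num : (1:ℕ) < 2) (by omega)]
  have h1 : (2 * k + 1) % 2 = 1 := by omega
  have h2 : (2 * k + 1) / 2 = k := by omega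
  rw [h1, h2, List.sum_cons]
  omega

private lemma key : ∀ n, 1 ≤ n → ∀ i, ¬ (∀ j, j ≤ n → f (i + j) = f (i + n + j)) := by
  intro n
  induction n using Nat.strong_induction_on with
  | _ n ih =>
    intro hn i h
    rcases Nat.even_or_odd n with ⟨m, hm⟩ | ⟨m, hm⟩
    · -- n = m + m, even case: reduce to period m at position ⌊i/2⌋
      have hm1 : 1 ≤ m := by omega
      rcases Nat.even_or_odd i with ⟨p, hp⟩ | ⟨p, hp⟩
      · refine ih m (by omega) hm1 p fun j hj => ?_
        have := h (2 * j) (by omega)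
        rw [show i + 2 * j = 2 * (p + j) by omega,
            show i + n + 2 * j = 2 * (p + m + j) by omega, f_even, f_even] at this
        exact this
      · refine ih m (by omega) hm1 p fun j hj => ?_
        have := h (2 * j) (by omega)
        rw [show i + 2 * j = 2 * (p + j) + 1 by omega,
            show i + n + 2 * j = 2 * (p + m + j) + 1 by omega, f_odd, f_odd] at this
        have b1 := f_lt (p + j); have b2 := f_lt (p + m + j)
        omega
    · -- n = 2 * m + 1, odd case
      rcases Nat.eq_zero_or_pos m with rfl | hm1
      · -- n = 1 : base case, contradiction from t(2k) ≠ t(2k+1)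
        have h0 := h 0 (by omega)
        have h1 := h 1 (by omega)
        rcases Nat.even_or_odd i with ⟨p, hp⟩ | ⟨p, hp⟩
        · rw [show i + 0 = 2 * p by omega, show i + n + 0 = 2 * p + 1 by omega,
              f_even, f_odd] at h0
          have := f_lt p
          omega
        · rw [show i + 1 = 2 * (p + 1) by omega, show i + n + 1 = 2 * (p + 1) + 1 by omega,
              f_even, f_odd] at h1
          have := f_lt (p + 1)
          omega
      · -- n = 2m+1 ≥ 3
        rcases Nat.even_or_odd i with ⟨p, hp⟩ | ⟨p, hp⟩
        · -- i even: derive period-1 overlap at p + m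
          have h0 := h 0 (by omega)
          have h1 := h 1 (by omega)
          have h2 := h 2 (by omega)
          have h3 := h 3 (by omega)
          rw [show i + 0 = 2 * p by omega, show i + n + 0 = 2 * (p + m) + 1 by omega,
              f_even, f_odd] at h0
          rw [show i + 1 = 2 * p + 1 by omega, show i + n + 1 = 2 * (p + m + 1) by omega,
              f_odd, f_even] at h1
          rw [show i + 2 = 2 * (p + 1) by omega, show i + n + 2 = 2 * (p + m + 1) + 1 by omega,
              f_even, f_odd] at h2
          rw [show i + 3 = 2 * (p + 1) + 1 by omega, show i + n + 3 = 2 * (p + m + 2) by omega,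
              f_odd, f_even] at h3
          refine ih 1 (by omega) le_rfl (p + m) fun j hj => ?_
          have b0 := f_lt p; have b1 := f_lt (p + 1)
          have b2 := f_lt (p + m); have b3 := f_lt (p + m + 1); have b4 := f_lt (p + m + 2)
          interval_cases j
          · rw [show p + m + 0 = p + m by omega, show p + m + 1 + 0 = p + m + 1 by omega]
            omega
          · rw [show p + m + 1 + 1 = p + m + 2 by omega]
            omega
        · -- i odd
          rcases Nat.lt_or_ge m 2 with hm2 | hm2
          · -- m = 1, n = 3, i odd: direct contradiction
            have hm' : m = 1 := by omega
            subst hm'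
            have h0 := h 0 (by omega)
            have h1 := h 1 (by omega)
            have h2 := h 2 (by omega)
            have h3 := h 3 (by omega)
            rw [show i + 0 = 2 * p + 1 by omega, show i + n + 0 = 2 * (p + 2) by omega,
                f_odd, f_even] at h0
            rw [show i + 1 = 2 * (p + 1) by omega, show i + n + 1 = 2 * (p + 2) + 1 by omega,
                f_even, f_odd] at h1
            rw [show i + 2 = 2 * (p + 1) + 1 by omega, show i + n + 2 = 2 * (p + 3) by omega,
                f_odd, f_even] at h2
            rw [show i + 3 = 2 * (p + 2) by omega, show i + n + 3 = 2 * (p + 3) + 1 by omega,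
                f_even, f_odd] at h3
            have b0 := f_lt p; have b1 := f_lt (p + 1)
            have b2 := f_lt (p + 2); have b3 := f_lt (p + 3)
            omega
          · -- m ≥ 2 (n ≥ 5), i odd: derive period-1 overlap at p + m + 1
            have h1 := h 1 (by omega)
            have h2 := h 2 (by omega)
            have h3 := h 3 (by omega)
            have h4 := h 4 (by omega)
            rw [show i + 1 = 2 * (p + 1) by omega, show i + n + 1 = 2 * (p + m + 1) + 1 by omega,
                f_even, f_odd] at h1
            rw [show i + 2 = 2 * (p + 1) + 1 by omega, show i + n + 2 = 2 * (p + m + 2) by omega,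
                f_odd, f_even] at h2
            rw [show i + 3 = 2 * (p + 2) by omega, show i + n + 3 = 2 * (p + m + 2) + 1 by omega,
                f_even, f_odd] at h3
            rw [show i + 4 = 2 * (p + 2) + 1 by omega, show i + n + 4 = 2 * (p + m + 3) by omega,
                f_odd, f_even] at h4
            refine ih 1 (by omega) le_rfl (p + m + 1) fun j hj => ?_
            have b0 := f_lt (p + 1); have b1 := f_lt (p + 2)
            have b2 := f_lt (p + m + 1); have b3 := f_lt (p + m + 2); have b4 := f_lt (p + m + 3)
            interval_cases j
            · rw [show p + m + 1 + 0 = p + m + 1 by omega,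
                  show p + m + 1 + 1 + 0 = p + m + 2 by omega]
              omega
            · rw [show p + m + 1 + 1 = p + m + 2 by omega,
                  show p + m + 1 + 1 + 1 = p + m + 3 by omega]
              omega

theorem thue_morse_overlap_free :
    ¬ ∃ (i n : ℕ), 1 ≤ n ∧ ∀ j ≤ n, t (i + j) = t (i + n + j) := by
  rintro ⟨i, n, hn, h⟩
  refine key n hn i fun j hj => ?_
  have := h j hj
  simpa [t, f, Fin.ext_iff] using this
end

section
/- The two-sided infinite Thue-Morse word u : ℤ → Fin 2, defined by u(n) = t(n) for n ≥ 0 and u(n) = t(-1-n) for n < 0, is overlap-free: there is no i ∈ ℤ and n ≥ 1 with u(i+j) = u(i+n+j) for all 0 ≤ j ≤ n. -/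
/-- Two-sided Thue-Morse word. -/
def u (n : ℤ) : Fin 2 := if 0 ≤ n then t n.toNat else t (-1 - n).toNat

/-!
An overlap of `t` with even period `2m` at `i` descends, through `t k = t (k / 2) + t (k % 2)`,
to an overlap with period `m` at `i / 2`. For odd period `n`, of the two positions `i + j` and
`i + n + j` one is even, and `t (2c + 1) ≠ t (2c)`; so the overlap alternates and
`t (i + n) ≠ t i`. Hence `t` is overlap-free, by strong induction on the period.

For odd `j`, the factor of `t` on `[0, 2 ^ (j + 1))` is the complement of `u` on
`[-2 ^ j, 2 ^ j)`: adding `2 ^ j` adds one binary digit, and `x ↦ 2 ^ j - 1 - x`, which relates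
the two halves of `u`, flips all `j` digits. So an overlap of `u` gives one of `t`.
-/

namespace Nat

theorem digits_sum_eq_mod_add_digits_sum_div {b : ℕ} (hb : 1 < b) (n : ℕ) :
    (digits b n).sum = n % b + (digits b (n / b)).sum := by
  rcases n.eq_zero_or_pos with rfl | hn
  · simp
  · rw [digits_def' hb hn, List.sum_cons]

theorem digits_two_sum_add_digits_two_sum_of_add_add_one_eq_two_pow {M N j : ℕ}
    (h : M + N + 1 = 2 ^ j) : (digits 2 M).sum + (digits 2 N).sum = j := by
  induction j generalizing M N with
  | zero =>
    obtain ⟨rfl, rfl⟩ : M = 0 ∧ N = 0 := by omega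
    rfl
  | succ j ih =>
    rw [pow_succ] at h
    rw [digits_sum_eq_mod_add_digits_sum_div one_lt_two M,
      digits_sum_eq_mod_add_digits_sum_div one_lt_two N,
      ← ih (M := M / 2) (N := N / 2) (by omega)]
    omega

end Nat

theorem Fin.two_apply_add_ne_of_odd {f : ℕ → Fin 2} {i n : ℕ} (hn : Odd n)
    (hf : ∀ j < n, f (i + j + 1) = f (i + j) + 1) : f (i + n) ≠ f i := by
  have alternate : ∀ j ≤ n, (f (i + j)).val = ((f i).val + j) % 2 := by
    intro j hj
    induction j with
    | zero => simp [Nat.mod_eq_of_lt (f i).isLt]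
    | succ j ih =>
      rw [← add_assoc, hf j hj, Fin.val_add, ih (by omega), Fin.val_one]
      omega
  obtain ⟨m, rfl⟩ := hn
  have := alternate _ le_rfl
  omega

open Nat

theorem t_eq_t_div_two_add_t_mod_two (n : ℕ) : t n = t (n / 2) + t (n % 2) := by
  have hmod : (digits 2 (n % 2)).sum = n % 2 := by
    rcases Nat.mod_two_eq_zero_or_one n with h | h <;> rw [h] <;> rfl
  ext
  simp only [t, Fin.val_add, digits_sum_eq_mod_add_digits_sum_div one_lt_two n, hmod]
  omega

theorem t_add_one_of_even {x : ℕ} (hx : Even x) : t (x + 1) = t x + 1 := by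
  obtain ⟨c, rfl⟩ := hx
  rw [t_eq_t_div_two_add_t_mod_two (c + c + 1), t_eq_t_div_two_add_t_mod_two (c + c),
    show (c + c + 1) / 2 = (c + c) / 2 by omega, show (c + c + 1) % 2 = 1 by omega,
    show (c + c) % 2 = 0 by omega, show t 0 = 0 from rfl, add_zero]
  rfl

theorem t_add_two_pow {M j : ℕ} (hM : M < 2 ^ j) : t (M + 2 ^ j) = t M + 1 := by
  induction j generalizing M with
  | zero =>
    obtain rfl : M = 0 := by omega
    rfl
  | succ j ih =>
    rw [pow_succ] at hM ⊢
    rw [t_eq_t_div_two_add_t_mod_two, t_eq_t_div_two_add_t_mod_two M,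
      show (M + 2 ^ j * 2) / 2 = M / 2 + 2 ^ j by omega,
      show (M + 2 ^ j * 2) % 2 = M % 2 by omega, ih (by omega), add_right_comm]

theorem t_eq_add_one_of_add_add_one_eq_two_pow {M N j : ℕ} (hj : Odd j)
    (h : M + N + 1 = 2 ^ j) : t N = t M + 1 := by
  have := digits_two_sum_add_digits_two_sum_of_add_add_one_eq_two_pow h
  obtain ⟨k, rfl⟩ := hj
  ext
  simp only [t, Fin.val_add]
  omega

theorem u_add_one_eq_t {j : ℕ} (hj : Odd j) {m : ℤ} (h₁ : -2 ^ j ≤ m) (h₂ : m < 2 ^ j) :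
    u m + 1 = t (m + 2 ^ j).toNat := by
  have hcast : (2 : ℤ) ^ j = ((2 ^ j : ℕ) : ℤ) := by push_cast; rfl
  rw [hcast] at h₁ h₂ ⊢
  unfold u
  split_ifs with hm
  · rw [show (m + (2 ^ j : ℕ)).toNat = m.toNat + 2 ^ j by omega, t_add_two_pow (by omega)]
  · rw [t_eq_add_one_of_add_add_one_eq_two_pow hj (M := (m + (2 ^ j : ℕ)).toNat)
      (N := (-1 - m).toNat) (by omega), add_assoc, show (1 : Fin 2) + 1 = 0 from rfl, add_zero]

theorem exists_u_add_one_eq_t (N : ℕ) :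
    ∃ K : ℤ, N < K ∧ ∀ m, -K ≤ m → m < K → u m + 1 = t (m + K).toNat := by
  refine ⟨2 ^ (2 * N + 1), ?_, fun _ => u_add_one_eq_t (odd_two_mul_add_one N)⟩
  exact_mod_cast Nat.lt_two_pow_self.trans (Nat.pow_lt_pow_right one_lt_two (by omega))

theorem t_overlap_div_two {i m : ℕ} (H : ∀ j ≤ m + m, t (i + j) = t (i + (m + m) + j)) :
    ∀ l ≤ m, t (i / 2 + l) = t (i / 2 + m + l) := by
  intro l hl
  have h := H (2 * l) (by omega)
  rw [t_eq_t_div_two_add_t_mod_two (i + 2 * l), t_eq_t_div_two_add_t_mod_two (i + (m + m) + 2 * l),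
    show (i + 2 * l) / 2 = i / 2 + l by omega,
    show (i + (m + m) + 2 * l) / 2 = i / 2 + m + l by omega,
    show (i + (m + m) + 2 * l) % 2 = (i + 2 * l) % 2 by omega] at h
  exact add_right_cancel h

theorem t_add_one_of_overlap_of_odd {i n : ℕ} (hn : Odd n)
    (H : ∀ j ≤ n, t (i + j) = t (i + n + j)) {j : ℕ} (hj : j < n) :
    t (i + j + 1) = t (i + j) + 1 := by
  rcases Nat.even_or_odd (i + j) with he | ho
  · exact t_add_one_of_even he
  · rw [show i + j + 1 = i + (j + 1) from rfl, H (j + 1) hj, H j hj.le]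
    have he : Even (i + n + j) := by rw [add_right_comm]; exact ho.add_odd hn
    exact t_add_one_of_even he

theorem t_not_overlap {n : ℕ} (hn : 1 ≤ n) (i : ℕ) :
    ¬ ∀ j ≤ n, t (i + j) = t (i + n + j) := by
  induction n using Nat.strong_induction_on generalizing i with
  | _ n ih =>
    intro H
    rcases Nat.even_or_odd n with ⟨m, rfl⟩ | hodd
    · exact ih m (by omega) (by omega) (i / 2) (t_overlap_div_two H)
    · exact Fin.two_apply_add_ne_of_odd hodd (fun j hj => t_add_one_of_overlap_of_odd hodd H hj)
        (H 0 (by omega)).symm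

theorem two_sided_thue_morse_overlap_free :
    ¬ ∃ (i : ℤ) (n : ℕ), 1 ≤ n ∧ ∀ j ≤ n, u (i + j) = u (i + n + j) := by
  rintro ⟨i, n, hn, H⟩
  obtain ⟨K, hK, hu⟩ := exists_u_add_one_eq_t (i.natAbs + 2 * n)
  refine t_not_overlap hn (i + K).toNat fun j hj => ?_
  have h₁ := hu (i + j) (by omega) (by omega)
  have h₂ := hu (i + n + j) (by omega) (by omega)
  rw [show (i + j + K).toNat = (i + K).toNat + j by omega] at h₁
  rw [show (i + n + j + K).toNat = (i + K).toNat + n + j by omega] at h₂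
  rw [← h₁, ← h₂, H j hj]
end

section
/- For every n ≥ 0, the reversal of μ^(2n+1)(0) gives the last 2^(2n+1) letters of the left half of the two-sided Thue-Morse word; equivalently, (ν^(2n+1)(0))_k = t(2^(2n+1) - 1 - k) for 0 ≤ k < 2^(2n+1), where ν(0)=10, ν(1)=01. -/
/-- Thue-Morse morphism on letters: 0 ↦ 01, 1 ↦ 10. -/
def muL : Fin 2 → List (Fin 2) := fun a => if a = 0 then [0, 1] else [1, 0]

/-- The morphism ν on letters: 0 ↦ 10, 1 ↦ 01. -/
def nuL : Fin 2 → List (Fin 2) := fun a => if a = 0 then [1, 0] else [0, 1]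

/-- k-fold iterate of μ applied to a word. -/
def muIter (k : ℕ) (w : List (Fin 2)) : List (Fin 2) := (fun v => v.flatMap muL)^[k] w

/-- k-fold iterate of ν applied to a word. -/
def nuIter (k : ℕ) (w : List (Fin 2)) : List (Fin 2) := (fun v => v.flatMap nuL)^[k] w

lemma muL_length (a : Fin 2) : (muL a).length = 2 := by fin_cases a <;> rfl

lemma flatMap_length (l : List (Fin 2)) : (l.flatMap muL).length = 2 * l.length := by
  induction l with
  | nil => rfl
  | cons a l ih => simp [List.flatMap_cons, ih, muL_length]; ring

lemma muIter_length (m : ℕ) : (muIter m [0]).length = 2 ^ m := by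
  induction m with
  | zero => rfl
  | succ m ih =>
    have : muIter (m+1) [0] = (muIter m [0]).flatMap muL :=
      Function.iterate_succ_apply' _ _ _
    rw [this, flatMap_length, ih, pow_succ]; ring

lemma flatMap_getD (l : List (Fin 2)) (k : ℕ) (hk : k < 2 * l.length) :
    (l.flatMap muL).getD k 0 = (muL (l.getD (k / 2) 0)).getD (k % 2) 0 := by
  induction l generalizing k with
  | nil => simp at hk
  | cons a l ih =>
    rw [List.flatMap_cons]
    rcases Nat.lt_or_ge k 2 with h | h
    · rw [List.getD_append _ _ _ _ (by rw [muL_length]; exact h)]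
      have : k / 2 = 0 := Nat.div_eq_of_lt h
      have h2 : k % 2 = k := Nat.mod_eq_of_lt h
      rw [this, h2]; rfl
    · rw [List.getD_append_right _ _ _ _ (by rw [muL_length]; exact h), muL_length]
      have hlt : k - 2 < 2 * l.length := by simp at hk; omega
      rw [ih _ hlt]
      have h1 : (k - 2) / 2 = k / 2 - 1 := by omega
      have h2 : (k - 2) % 2 = k % 2 := by omega
      have h3 : 1 ≤ k / 2 := by omega
      rw [h1, h2]
      congr 2
      rcases Nat.exists_eq_add_of_le h3 with ⟨q, hq⟩
      rw [hq, Nat.add_comm 1 q]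
      simp [List.getD]

lemma t_two_mul (q : ℕ) : t (2 * q) = t q := by
  rcases Nat.eq_zero_or_pos q with h | h
  · simp [h]
  · apply Fin.ext
    show (Nat.digits 2 (2 * q)).sum % 2 = (Nat.digits 2 q).sum % 2
    rw [Nat.digits_def' (by norm_num : 1 < 2) (by omega)]
    simp [Nat.mul_div_cancel_left _ (by norm_num : 0 < 2), Nat.mul_mod_right]

lemma t_two_mul_add_one (q : ℕ) : t (2 * q + 1) = t q + 1 := by
  apply Fin.ext
  show (Nat.digits 2 (2 * q + 1)).sum % 2 = _
  rw [Nat.digits_def' (by norm_num : 1 < 2) (by omega)]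
  have h1 : (2 * q + 1) % 2 = 1 := by omega
  have h2 : (2 * q + 1) / 2 = q := by omega
  rw [h1, h2]
  show _ = (⟨(Nat.digits 2 q).sum % 2, _⟩ + (1:Fin 2)).val
  simp [Fin.add_def, Nat.add_mod]
  omega

lemma muL_getD0 (a : Fin 2) : (muL a).getD 0 0 = a := by fin_cases a <;> rfl
lemma muL_getD1 (a : Fin 2) : (muL a).getD 1 0 = a + 1 := by fin_cases a <;> rfl

lemma muIter_tm (m : ℕ) : ∀ k < 2 ^ m, (muIter m [0]).getD k 0 = t k := by
  induction m with
  | zero =>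
    intro k hk; interval_cases k
    apply Fin.ext; simp [muIter, t]
  | succ m ih =>
    intro k hk
    have hstep : muIter (m+1) [0] = (muIter m [0]).flatMap muL :=
      Function.iterate_succ_apply' _ _ _
    have hlen : k < 2 * (muIter m [0]).length := by
      rw [muIter_length]; rw [pow_succ] at hk; omega
    rw [hstep, flatMap_getD _ _ hlen, ih (k / 2) (by rw [pow_succ] at hk; omega)]
    rcases Nat.even_or_odd k with ⟨q, hq⟩ | ⟨q, hq⟩
    · have : k % 2 = 0 := by omega
      have hd : k / 2 = q := by omega
      rw [this, hd, muL_getD0, hq, ← two_mul, t_two_mul]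
    · have : k % 2 = 1 := by omega
      have hd : k / 2 = q := by omega
      rw [this, hd, muL_getD1, hq, t_two_mul_add_one]

lemma muL_reverse (a : Fin 2) : (muL a).reverse = nuL a := by fin_cases a <;> rfl

lemma nuIter_eq_reverse (m : ℕ) (w : List (Fin 2)) :
    nuIter m w.reverse = (muIter m w).reverse := by
  induction m with
  | zero => rfl
  | succ m ih =>
    have h1 : nuIter (m+1) w.reverse = (nuIter m w.reverse).flatMap nuL :=
      Function.iterate_succ_apply' _ _ _
    have h2 : muIter (m+1) w = (muIter m w).flatMap muL :=
      Function.iterate_succ_apply' _ _ _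
    rw [h1, h2, ih, List.reverse_flatMap,
      show (List.reverse ∘ muL) = nuL from funext muL_reverse]

theorem nu_iter_gives_reversed_thue_morse (n : ℕ) :
    ∀ k < 2 ^ (2 * n + 1),
      (nuIter (2 * n + 1) [0]).getD k 0 = t (2 ^ (2 * n + 1) - 1 - k) := by
  intro k hk
  set m := 2 * n + 1
  have hrev : nuIter m [0] = (muIter m [0]).reverse := by
    simpa using nuIter_eq_reverse m [0]
  have hlen := muIter_length m
  have hk' : k < (muIter m [0]).length := by omega
  rw [hrev]
  rw [List.getD_eq_getElem _ _ (by simpa using hk'), List.getElem_reverse]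
  rw [← List.getD_eq_getElem _ (0:Fin 2) (by omega)]
  rw [muIter_tm m _ (by omega), hlen]
end

section
/- The 2-coloring of the full plane lattice defined by g(i,j) = u(i+j), where u is the two-sided Thue-Morse word, is frameless: there are no m, n ∈ ℤ and p, q ≥ 1 with g(m, n+i) = g(m+p, n+i) for all 0 ≤ i ≤ q and g(m+j, n) = g(m+j, n+q) for all 0 ≤ j ≤ p. -/
/-- Coloring of the full plane lattice. -/
def g (i j : ℤ) : Fin 2 := u (i + j)

lemma t_even (n : ℕ) : t (2*n) = t n := by
  rcases Nat.eq_zero_or_pos n with h | h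
  · subst h; rfl
  · apply Fin.ext
    show (Nat.digits 2 (2*n)).sum % 2 = (Nat.digits 2 n).sum % 2
    rw [Nat.digits_def' (by norm_num : 1 < 2) (by omega)]
    simp [Nat.mul_div_cancel_left n, Nat.mul_mod_right]

lemma t_odd (n : ℕ) : t (2*n+1) = t n + 1 := by
  apply Fin.ext
  show (Nat.digits 2 (2*n+1)).sum % 2 = _
  rw [Nat.digits_def' (by norm_num : 1 < 2) (by omega)]
  have h1 : (2*n+1) % 2 = 1 := by omega
  have h2 : (2*n+1) / 2 = n := by omega
  rw [h1, h2]
  show (1 + (Nat.digits 2 n).sum) % 2 = ((Nat.digits 2 n).sum % 2 + 1 % 2) % 2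
  omega

lemma add11 : ∀ x : Fin 2, x + 1 + 1 = x := by decide

lemma ne_add_one : ∀ x : Fin 2, x ≠ x + 1 := by decide

/-- Companion two-sided word. -/
def v (n : ℤ) : Fin 2 := if 0 ≤ n then t n.toNat else t (-1 - n).toNat + 1

lemma hu2 (n : ℤ) : u (2*n) = v n := by
  unfold u v
  by_cases h : 0 ≤ n
  · rw [if_pos (by omega), if_pos h]
    have e : (2*n).toNat = 2 * n.toNat := by omega
    rw [e, t_even]
  · rw [if_neg (by omega), if_neg h]
    have e : (-1 - 2*n).toNat = 2 * (-1-n).toNat + 1 := by omega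
    rw [e, t_odd]

lemma hu2' (n : ℤ) : u (2*n+1) = v n + 1 := by
  unfold u v
  by_cases h : 0 ≤ n
  · rw [if_pos (by omega), if_pos h]
    have e : (2*n+1).toNat = 2 * n.toNat + 1 := by omega
    rw [e, t_odd]
  · rw [if_neg (by omega), if_neg h]
    have e : (-1 - (2*n+1)).toNat = 2 * (-1-n).toNat := by omega
    rw [e, t_even, add11]

lemma hv2 (n : ℤ) : v (2*n) = u n := by
  unfold u v
  by_cases h : 0 ≤ n
  · rw [if_pos (by omega), if_pos h]
    have e : (2*n).toNat = 2 * n.toNat := by omega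
    rw [e, t_even]
  · rw [if_neg (by omega), if_neg h]
    have e : (-1 - 2*n).toNat = 2 * (-1-n).toNat + 1 := by omega
    rw [e, t_odd, add11]

lemma hv2' (n : ℤ) : v (2*n+1) = u n + 1 := by
  unfold u v
  by_cases h : 0 ≤ n
  · rw [if_pos (by omega), if_pos h]
    have e : (2*n+1).toNat = 2 * n.toNat + 1 := by omega
    rw [e, t_odd]
  · rw [if_neg (by omega), if_neg h]
    have e : (-1 - (2*n+1)).toNat = 2 * (-1-n).toNat := by omega
    rw [e, t_even]

/-- Doubling relation between two words. -/
def Dbl (a b : ℤ → Fin 2) : Prop := (∀ n, a (2*n) = b n) ∧ (∀ n, a (2*n+1) = b n + 1)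

lemma no3 (a b : ℤ → Fin 2) (h : Dbl a b) (s : ℤ)
    (h1 : a s = a (s+1)) (h2 : a (s+1) = a (s+2)) : False := by
  obtain ⟨he, ho⟩ := h
  rcases Int.even_or_odd s with ⟨c, hc⟩ | ⟨c, hc⟩
  · rw [hc, show ((c:ℤ)+c) = 2*c by ring, he, ho] at h1
    exact ne_add_one _ h1
  · rw [hc, show (2*c+1+1 : ℤ) = 2*(c+1) by ring,
        show (2*c+1+2 : ℤ) = 2*(c+1)+1 by ring, he, ho] at h2
    exact ne_add_one _ h2

lemma no_overlap : ∀ d : ℕ, 1 ≤ d → ∀ a b : ℤ → Fin 2, Dbl a b → Dbl b a →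
    ∀ s : ℤ, ¬ (∀ x : ℤ, s ≤ x → x ≤ s + d → a x = a (x + d)) := by
  intro d
  induction d using Nat.strong_induction_on with
  | _ d IH =>
  intro hd a b hab hba s h
  obtain ⟨hae, hao⟩ := hab
  rcases eq_or_lt_of_le hd with hd1 | hd2
  · -- d = 1
    have hd1' : (d : ℤ) = 1 := by omega
    have e1 := h s le_rfl (by omega)
    have e2 := h (s+1) (by omega) (by omega)
    rw [hd1'] at e1 e2
    exact no3 a b ⟨hae, hao⟩ s e1 (by rw [show s + 1 + 1 = s + 2 by ring] at e2; exact e2)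
  · rcases Nat.even_or_odd d with ⟨e, hde⟩ | ⟨k, hdk⟩
    · -- d = 2e even
      have he1 : 1 ≤ e := by omega
      have hlt : e < d := by omega
      rcases Int.even_or_odd s with ⟨c, hc⟩ | ⟨c, hc⟩
      · apply IH e hlt he1 b a hba ⟨hae, hao⟩ c
        intro y hy1 hy2
        have hx := h (2*y) (by omega) (by omega)
        have e1 : (2*y + (d:ℤ)) = 2*(y+e) := by omega
        rw [e1, hae, hae] at hx
        exact hx
      · apply IH e hlt he1 b a hba ⟨hae, hao⟩ c
        intro y hy1 hy2
        have hx := h (2*y+1) (by omega) (by omega)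
        have e1 : (2*y + 1 + (d:ℤ)) = 2*(y+e)+1 := by omega
        rw [e1, hao, hao] at hx
        exact add_right_cancel hx
    · -- d = 2k+1 odd, k ≥ 1
      have hk1 : 1 ≤ k := by omega
      have C : ∀ m : ℤ, s - 1 ≤ 2*m → 2*m ≤ s + 2*(d:ℤ) - 2 → a (2*m) = a (2*m+2) := by
        intro m hm1 hm2
        have h5 : a (2*m+1) = a (2*m) + 1 := by rw [hao, hae]
        by_cases hcc : s + (d:ℤ) - 1 ≤ 2*m
        · have hx1 := h (2*m+1-d) (by omega) (by omega)
          have hx2 := h (2*m+2-d) (by omega) (by omega)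
          rw [show (2*m+1-(d:ℤ)) + d = 2*m+1 by ring] at hx1
          rw [show (2*m+2-(d:ℤ)) + d = 2*m+2 by ring] at hx2
          rw [show (2*m+1-(d:ℤ)) = 2*(m-k) by omega, hae] at hx1
          rw [show (2*m+2-(d:ℤ)) = 2*(m-k)+1 by omega, hao] at hx2
          rw [← hx2, hx1, h5, add11]
        · have hx1 := h (2*m+1) (by omega) (by omega)
          have hx2 := h (2*m+2) (by omega) (by omega)
          rw [show (2*m+1+(d:ℤ)) = 2*(m+k+1) by omega, hae] at hx1
          rw [show (2*m+2+(d:ℤ)) = 2*(m+k+1)+1 by omega, hao] at hx2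
          rw [hx2, ← hx1, h5, add11]
      rcases Int.even_or_odd s with ⟨c, hc⟩ | ⟨c, hc⟩
      · have c1 := C c (by omega) (by omega)
        have c2 := C (c+1) (by omega) (by omega)
        rw [show (2*c+2 : ℤ) = 2*(c+1) by ring, hae, hae] at c1
        rw [show (2*(c+1)+2 : ℤ) = 2*(c+2) by ring, hae, hae] at c2
        exact no3 b a hba c c1 c2
      · have c1 := C (c+1) (by omega) (by omega)
        have c2 := C (c+2) (by omega) (by omega)
        rw [show (2*(c+1)+2 : ℤ) = 2*(c+2) by ring, hae, hae] at c1
        rw [show (2*(c+2)+2 : ℤ) = 2*(c+3) by ring, hae, hae] at c2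
        exact no3 b a hba (c+1) (by rw [show ((c:ℤ)+1+1) = c+2 by ring]; exact c1)
          (by rw [show ((c:ℤ)+1+1) = c+2 by ring, show ((c:ℤ)+1+2) = c+3 by ring]; exact c2)

theorem full_plane_frameless :
    ¬ ∃ (m n : ℤ) (p q : ℕ), 1 ≤ p ∧ 1 ≤ q ∧
      (∀ i ≤ q, g m (n + i) = g (m + p) (n + i)) ∧
      (∀ j ≤ p, g (m + j) n = g (m + j) (n + q)) := by
  rintro ⟨m, n, p, q, hp, hq, h1, h2⟩
  have hD : Dbl u v := ⟨hu2, hu2'⟩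
  have hD' : Dbl v u := ⟨hv2, hv2'⟩
  rcases le_total p q with hpq | hqp
  · apply no_overlap p hp u v hD hD' (m+n)
    intro x hx1 hx2
    have := h1 (x - m - n).toNat (by omega)
    simp only [g] at this
    rw [show m + (n + ((x - m - n).toNat : ℤ)) = x by omega,
        show m + (p:ℤ) + (n + ((x - m - n).toNat : ℤ)) = x + p by omega] at this
    exact this
  · apply no_overlap q hq u v hD hD' (m+n)
    intro x hx1 hx2
    have := h2 (x - m - n).toNat (by omega)
    simp only [g] at this
    rw [show m + ((x - m - n).toNat : ℤ) + n = x by omega,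
        show m + ((x - m - n).toNat : ℤ) + (n + q) = x + q by omega] at this
    exact this
end

section
/- If a sequence s : ℕ → Fin 2 is overlap-free, then the coloring f(i,j) = s(i+j) of ℕ × ℕ is frameless: for any m, n ≥ 0 and p, q ≥ 1, it is not the case that both f(m, n+i) = f(m+p, n+i) for all 0 ≤ i ≤ q and f(m+j, n) = f(m+j, n+q) for all 0 ≤ j ≤ p. -/
theorem overlap_free_implies_frameless (s : ℕ → Fin 2)
    (hs : ¬ ∃ (i n : ℕ), 1 ≤ n ∧ ∀ j ≤ n, s (i + j) = s (i + n + j)) :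
    ¬ ∃ (m n p q : ℕ), 1 ≤ p ∧ 1 ≤ q ∧
      (∀ i ≤ q, s (m + (n + i)) = s (m + p + (n + i))) ∧
      (∀ j ≤ p, s (m + j + n) = s (m + j + (n + q))) := by
  rintro ⟨m, n, p, q, hp, hq, hrow, hcol⟩
  apply hs
  rcases le_total p q with h | h
  · exact ⟨m + n, p, hp, fun j hj => by
      have := hrow j (hj.trans h)
      calc s (m + n + j) = s (m + (n + j)) := by ring_nf
        _ = s (m + p + (n + j)) := this
        _ = s (m + n + p + j) := by ring_nf⟩
  · exact ⟨m + n, q, hq, fun j hj => by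
      have := hcol j (hj.trans h)
      calc s (m + n + j) = s (m + j + n) := by ring_nf
        _ = s (m + j + (n + q)) := this
        _ = s (m + n + q + j) := by ring_nf⟩
end

section
/- If a coloring f : ℤ × ℤ → Fin 2 satisfies f(i,j) = f(i', j') whenever i + j = i' + j' (i.e., f is constant on anti-diagonals), and the induced sequence on anti-diagonals is overlap-free, then f is frameless. -/
theorem antidiagonal_overlap_free_implies_frameless
    (f : ℤ → ℤ → Fin 2) (s : ℤ → Fin 2)
    (hf : ∀ i j, f i j = s (i + j))
    (hs : ¬ ∃ (i : ℤ) (n : ℕ), 1 ≤ n ∧ ∀ j ≤ n, s (i + j) = s (i + n + j)) :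
    ¬ ∃ (m n : ℤ) (p q : ℕ), 1 ≤ p ∧ 1 ≤ q ∧
      (∀ i ≤ q, f m (n + i) = f (m + p) (n + i)) ∧
      (∀ j ≤ p, f (m + j) n = f (m + j) (n + q)) := by
  rintro ⟨m, n, p, q, hp, hq, hr, hc⟩
  apply hs
  rcases le_total p q with h | h
  · refine ⟨m + n, p, hp, fun j hj => ?_⟩
    have := hr j (le_trans hj h)
    simp only [hf] at this
    rw [show m + n + (j : ℤ) = m + (n + j) by ring,
        show m + n + (p : ℤ) + j = m + p + (n + j) by ring]
    exact this
  · refine ⟨m + n, q, hq, fun j hj => ?_⟩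
    have := hc j (le_trans hj h)
    simp only [hf] at this
    rw [show m + n + (j : ℤ) = m + j + n by ring,
        show m + n + (q : ℤ) + j = m + j + (n + q) by ring]
    exact this
end
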